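/- Let μ, λ be real numbers with μλ ≠ 0 and such that either (−1 < μ ≤ λ ≤ 1) or (μ = −1 and −1 ≤ λ < 0). Then there exists a derivation of the Lie algebra rh₃ = h₃ × ℝ whose characteristic polynomial is X(X − 1)(X − μ)(X − λ) if and only if at least one of the following holds: μ = −1, λ = μ, λ = −μ, λ = 1, λ = 1 − μ, or λ = 1 + μ. -/

import Mathlib

set_option linter.unusedTactic false
set_option linter.unnecessarySeqFocus false
set_option linter.unreachableTactic false

open Polynomial

/-- The 3-dimensional Heisenberg Lie algebra `h₃`: the real vector space `Fin 3 → ℝ`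
with basis `e₁, e₂, e₃` and only nonzero bracket `⁅e₁, e₂⁆ = e₃`. -/
def H3 : Type := Fin 3 → ℝ

noncomputable instance : AddCommGroup H3 := Pi.addCommGroup
noncomputable instance : Module ℝ H3 := Pi.module _ _ _
instance : FiniteDimensional ℝ H3 := inferInstanceAs (FiniteDimensional ℝ (Fin 3 → ℝ))

lemma H3.add_apply (x y : H3) (i : Fin 3) : (x + y) i = x i + y i := rfl
lemma H3.smul_apply (r : ℝ) (x : H3) (i : Fin 3) : (r • x) i = r * x i := rfl

noncomputable instance : LieRing H3 :=
  { (inferInstance : AddCommGroup H3) with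
    bracket := fun x y => ![0, 0, x 0 * y 1 - x 1 * y 0]
    add_lie := by
      intro x y z
      show (![_,_,_] : Fin 3 → ℝ) = ![_,_,_] + ![_,_,_]
      funext i
      fin_cases i <;> simp [H3.add_apply] <;> (try erw [H3.add_apply]) <;> simp <;> ring
    lie_add := by
      intro x y z
      show (![_,_,_] : Fin 3 → ℝ) = ![_,_,_] + ![_,_,_]
      funext i
      fin_cases i <;> simp [H3.add_apply] <;> (try erw [H3.add_apply]) <;> simp <;> ring
    lie_self := by
      intro x
      show (![_,_,_] : Fin 3 → ℝ) = 0
      funext i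
      fin_cases i <;> simp <;> ring
    leibniz_lie := by
      intro x y z
      show (![_,_,_] : Fin 3 → ℝ) = ![_,_,_] + ![_,_,_]
      funext i
      fin_cases i <;> simp [H3.add_apply] <;> (try erw [H3.add_apply]) <;> simp <;> ring }

noncomputable instance : LieAlgebra ℝ H3 :=
  { lie_smul := by
      intro r x y
      show (![_,_,_] : Fin 3 → ℝ) = r • ![_,_,_]
      funext i
      fin_cases i <;> simp [H3.smul_apply] <;> (try erw [H3.smul_apply]) <;> simp <;> ring }

/-- `rh₃ := h₃ × ℝ`, the product Lie algebra of the Heisenberg Lie algebra `h₃` with the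
1-dimensional abelian Lie algebra `ℝ`. -/
def RH3 : Type := H3 × ℝ

noncomputable instance : AddCommGroup RH3 := inferInstanceAs (AddCommGroup (H3 × ℝ))
noncomputable instance : Module ℝ RH3 := inferInstanceAs (Module ℝ (H3 × ℝ))
instance : FiniteDimensional ℝ RH3 := inferInstanceAs (FiniteDimensional ℝ (H3 × ℝ))

noncomputable instance : LieRing RH3 :=
  { (inferInstance : AddCommGroup RH3) with
    bracket := fun x y => (⁅x.1, y.1⁆, 0)
    add_lie := by
      intro x y z
      show (⁅x.1 + y.1, z.1⁆, (0:ℝ)) = (⁅x.1, z.1⁆ + ⁅y.1, z.1⁆, 0 + 0)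
      simp [add_lie]
    lie_add := by
      intro x y z
      show (⁅x.1, y.1 + z.1⁆, (0:ℝ)) = (⁅x.1, y.1⁆ + ⁅x.1, z.1⁆, 0 + 0)
      simp [lie_add]
    lie_self := by
      intro x
      show (⁅x.1, x.1⁆, (0:ℝ)) = (0, 0)
      simp
    leibniz_lie := by
      intro x y z
      show (⁅x.1, ⁅y.1, z.1⁆⁆, (0:ℝ)) = (⁅⁅x.1, y.1⁆, z.1⁆ + ⁅y.1, ⁅x.1, z.1⁆⁆, 0 + 0)
      rw [← leibniz_lie]
      simp }

noncomputable instance : LieAlgebra ℝ RH3 :=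
  { lie_smul := by
      intro r x y
      show (⁅x.1, r • y.1⁆, (0:ℝ)) = (r • ⁅x.1, y.1⁆, r • (0:ℝ))
      simp }

/-!
A derivation `D` of `rh₃` preserves the derived algebra `ℝ e₃` and the centre `span {e₃, e₄}`,
and since `e₃ = ⁅e₁, e₂⁆` it acts on `e₃` by the trace of the map `A` it induces on
`rh₃ ⧸ span {e₃, e₄}`. Hence `χ_D = (X - tr A) (X - c) χ_A`, so whenever `χ_D` splits its roots
are `α, β, α + β, c` with `α, β` the roots of `χ_A`. Conversely every such list is the spectrum of
the diagonal derivation `diag (α, β, α + β, c)`. Thus `X (X - 1) (X - μ) (X - λ)` is the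
characteristic polynomial of a derivation iff two of `0, 1, μ, λ` add up to a third one, and
under the normalisation of `(μ, λ)` this leaves the six listed relations.
-/

theorem Matrix.charpoly_fin_four_eq_of_zero_entries {R : Type*} [CommRing R] [Nontrivial R]
    (M : Matrix (Fin 4) (Fin 4) R)
    (h02 : M 0 2 = 0) (h12 : M 1 2 = 0) (h32 : M 3 2 = 0) (h03 : M 0 3 = 0) (h13 : M 1 3 = 0) :
    M.charpoly = (X - C (M 2 2)) * (X - C (M 3 3)) * (M.submatrix ![0, 1] ![0, 1]).charpoly := by
  rw [Matrix.charpoly_fin_two, Matrix.trace_fin_two, Matrix.det_fin_two, Matrix.charpoly,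
    Matrix.det_succ_column _ 2]
  simp [Fin.sum_univ_succ, Matrix.det_fin_three, Fin.succAbove, Matrix.charmatrix_apply, h02, h12,
    h32, h03, h13]
  ring

theorem Matrix.exists_charpoly_fin_two_eq_of_splits {R : Type*} [CommRing R] [IsDomain R]
    (A : Matrix (Fin 2) (Fin 2) R) (h : A.charpoly.Splits) :
    ∃ a b, A.charpoly = (X - C a) * (X - C b) ∧ A.trace = a + b := by
  obtain ⟨a, b, hab⟩ : ∃ a b, A.charpoly.roots = {a, b} := Multiset.card_eq_two.mp <| by
    rw [← h.natDegree_eq_card_roots, Matrix.charpoly_natDegree_eq_dim, Fintype.card_fin]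
  refine ⟨a, b, ?_, ?_⟩
  · rw [h.eq_prod_roots_of_monic (Matrix.charpoly_monic A), hab]
    simp
  · rw [Matrix.trace_eq_sum_roots_charpoly_of_splits h, hab]
    simp

theorem List.perm_of_prod_map_X_sub_C_eq {R : Type*} [CommRing R] [IsDomain R] {l l' : List R}
    (h : (l.map fun a => X - C a).prod = (l'.map fun a => X - C a).prod) : l.Perm l' := by
  rw [← Multiset.coe_eq_coe]
  have := congrArg roots h
  rwa [← Multiset.prod_coe, ← Multiset.prod_coe, ← Multiset.map_coe, ← Multiset.map_coe,
    roots_multiset_prod_X_sub_C, roots_multiset_prod_X_sub_C] at this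

namespace RH3

noncomputable def equivFun : RH3 ≃ₗ[ℝ] (Fin 4 → ℝ) where
  toFun p := ![p.1 0, p.1 1, p.1 2, p.2]
  invFun v := ((![v 0, v 1, v 2] : H3), v 3)
  map_add' _ _ := by ext i; fin_cases i <;> rfl
  map_smul' _ _ := by ext i; fin_cases i <;> rfl
  left_inv _ := Prod.ext (funext fun i => by fin_cases i <;> rfl) rfl
  right_inv _ := by ext i; fin_cases i <;> rfl

lemma equivFun_lie (x y : RH3) :
    equivFun ⁅x, y⁆ = ![0, 0, equivFun x 0 * equivFun y 1 - equivFun x 1 * equivFun y 0, 0] := by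
  ext i; fin_cases i <;> rfl

-- `e j` is the basis vector `e_{j+1}` of the paper.
noncomputable def e (j : Fin 4) : RH3 := equivFun.symm (Pi.single j 1)

@[simp] lemma equivFun_e (j : Fin 4) : equivFun (e j) = Pi.single j 1 := by simp [e]

lemma lie_e_zero_e_one : ⁅e 0, e 1⁆ = e 2 :=
  equivFun.injective <| by ext i; fin_cases i <;> simp [equivFun_lie]

lemma lie_e_zero_e_three : ⁅e 0, e 3⁆ = 0 :=
  equivFun.injective <| by ext i; fin_cases i <;> simp [equivFun_lie]

lemma lie_e_one_e_three : ⁅e 1, e 3⁆ = 0 :=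
  equivFun.injective <| by ext i; fin_cases i <;> simp [equivFun_lie]

noncomputable def toMatrix (f : Module.End ℝ RH3) : Matrix (Fin 4) (Fin 4) ℝ :=
  LinearMap.toMatrix' (equivFun.conj f)

lemma toMatrix_apply (f : Module.End ℝ RH3) (i j : Fin 4) :
    toMatrix f i j = equivFun (f (e j)) i := by
  simp [toMatrix, LinearEquiv.conj_apply, e]

lemma charpoly_eq_charpoly_toMatrix (f : Module.End ℝ RH3) :
    f.charpoly = (toMatrix f).charpoly := by
  rw [toMatrix, ← Matrix.charpoly_toLin', Matrix.toLin'_toMatrix', LinearEquiv.charpoly_conj]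

section Derivation

variable (D : LieDerivation ℝ RH3 RH3)

lemma toMatrix_lieDerivation_apply_two (i : Fin 4) :
    toMatrix D i 2 = ![0, 0, toMatrix D 0 0 + toMatrix D 1 1, 0] i := by
  have h := congrArg equivFun (D.apply_lie_eq_sub (e 0) (e 1))
  rw [lie_e_zero_e_one] at h
  simp only [toMatrix_apply, LieDerivation.coeFn_coe, h, map_sub, equivFun_lie]
  fin_cases i <;> simp [add_comm]

lemma toMatrix_lieDerivation_zero_three : toMatrix D 0 3 = 0 := by
  have h := congrFun (congrArg equivFun (D.apply_lie_eq_sub (e 1) (e 3))) 2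
  simpa [toMatrix_apply, LieDerivation.coeFn_coe, lie_e_one_e_three, equivFun_lie, eq_comm] using h

lemma toMatrix_lieDerivation_one_three : toMatrix D 1 3 = 0 := by
  have h := congrFun (congrArg equivFun (D.apply_lie_eq_sub (e 0) (e 3))) 2
  simpa [toMatrix_apply, LieDerivation.coeFn_coe, lie_e_zero_e_three, equivFun_lie, eq_comm] using h

lemma exists_charpoly_lieDerivation_eq :
    ∃ (A : Matrix (Fin 2) (Fin 2) ℝ) (c : ℝ),
      D.toLinearMap.charpoly = (X - C A.trace) * (X - C c) * A.charpoly := by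
  have h2 := toMatrix_lieDerivation_apply_two D
  refine ⟨(toMatrix D).submatrix ![0, 1] ![0, 1], toMatrix D 3 3, ?_⟩
  rw [charpoly_eq_charpoly_toMatrix, Matrix.charpoly_fin_four_eq_of_zero_entries _ (h2 0) (h2 1)
    (h2 3) (toMatrix_lieDerivation_zero_three D) (toMatrix_lieDerivation_one_three D), h2 2,
    Matrix.trace_fin_two]
  rfl

lemma exists_perm_of_charpoly_lieDerivation_eq {l : List ℝ}
    (hD : D.toLinearMap.charpoly = (l.map fun a => X - C a).prod) :
    ∃ a b c, [a + b, c, a, b].Perm l := by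
  obtain ⟨A, c, hA⟩ := exists_charpoly_lieDerivation_eq D
  have hl : (l.map fun a => X - C a).prod.Splits := Splits.listProd (by simp [Splits.X_sub_C])
  obtain ⟨a, b, hab, htr⟩ := A.exists_charpoly_fin_two_eq_of_splits
    (hl.of_dvd (hD ▸ LinearMap.charpoly_monic _).ne_zero (hD ▸ hA ▸ dvd_mul_left _ _))
  refine ⟨a, b, c, List.perm_of_prod_map_X_sub_C_eq ?_⟩
  rw [← hD, hA, hab, htr]
  simp only [List.map_cons, List.map_nil, List.prod_cons, List.prod_nil]
  ring

end Derivation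

noncomputable def diagonalDerivation (a b c : ℝ) : LieDerivation ℝ RH3 RH3 where
  toLinearMap := equivFun.symm.conj (Matrix.toLin' (Matrix.diagonal ![a, b, a + b, c]))
  leibniz' x y := equivFun.injective <| by
    ext i
    fin_cases i <;> simp [LinearEquiv.conj_apply, equivFun_lie, Matrix.mulVec_diagonal] <;> ring

lemma charpoly_diagonalDerivation (a b c : ℝ) :
    (diagonalDerivation a b c).toLinearMap.charpoly = (X - C a) * (X - C b) * (X - C (a + b)) * (X - C c) := by
  simp [diagonalDerivation, Matrix.charpoly_diagonal, Fin.prod_univ_four]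

end RH3

lemma relation_of_perm_add_triple {μ lam a b c : ℝ}
    (hrange : (-1 < μ ∧ μ ≤ lam ∧ lam ≤ 1) ∨ (μ = -1 ∧ -1 ≤ lam ∧ lam < 0))
    (h : [a + b, c, a, b].Perm [0, 1, μ, lam]) :
    μ = -1 ∨ lam = μ ∨ lam = -μ ∨ lam = 1 ∨ lam = 1 - μ ∨ lam = 1 + μ := by
  rw [← List.mem_permutations'] at h
  simp only [List.permutations', List.permutations'Aux, List.flatMap_cons, List.flatMap_nil,
    List.map_cons, List.map_nil, List.cons_append, List.nil_append, List.append_nil,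
    List.mem_cons, List.cons.injEq, List.not_mem_nil] at h
  grind (splits := 30)

theorem charpoly_derivation_rh3_r4_mu_lambda_iff_general (μ lam : ℝ)
    (hrange : (-1 < μ ∧ μ ≤ lam ∧ lam ≤ 1) ∨ (μ = -1 ∧ -1 ≤ lam ∧ lam < 0)) :
    (∃ D : LieDerivation ℝ RH3 RH3,
        LinearMap.charpoly D.toLinearMap = X * (X - 1) * (X - C μ) * (X - C lam)) ↔
      (μ = -1 ∨ lam = μ ∨ lam = -μ ∨ lam = 1 ∨ lam = 1 - μ ∨ lam = 1 + μ) := by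
  constructor
  · rintro ⟨D, hD⟩
    obtain ⟨a, b, c, hperm⟩ := RH3.exists_perm_of_charpoly_lieDerivation_eq D
      (l := [0, 1, μ, lam]) (by rw [hD]; simp [mul_assoc])
    exact relation_of_perm_add_triple hrange hperm
  · have of_eq (a b c : ℝ) (h : (X - C a) * (X - C b) * (X - C (a + b)) * (X - C c) =
        X * (X - 1) * (X - C μ) * (X - C lam)) :
        ∃ D : LieDerivation ℝ RH3 RH3,
          D.toLinearMap.charpoly = X * (X - 1) * (X - C μ) * (X - C lam) :=
      ⟨RH3.diagonalDerivation a b c, (RH3.charpoly_diagonalDerivation a b c).trans h⟩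
    rintro (rfl | rfl | rfl | rfl | rfl | rfl) <;>
      [refine of_eq 1 (-1) lam ?_; refine of_eq 0 lam 1 ?_; refine of_eq μ (-μ) 1 ?_;
        refine of_eq 0 1 μ ?_; refine of_eq μ (1 - μ) 0 ?_; refine of_eq 1 μ 0 ?_] <;>
      simp only [map_add, map_sub, map_neg, map_one, map_zero] <;> ring

/-- For `μλ ≠ 0` with either `-1 < μ ≤ λ ≤ 1` or `μ = -1 ∧ -1 ≤ λ < 0`, there exists a
derivation of `rh₃ = h₃ × ℝ` with characteristic polynomial `X * (X - 1) * (X - μ) * (X - λ)`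
if and only if `μ = -1`, `λ = μ`, `λ = -μ`, `λ = 1`, `λ = 1 - μ` or `λ = 1 + μ`. -/
theorem charpoly_derivation_rh3_r4_mu_lambda_iff (μ lam : ℝ) (hne : μ * lam ≠ 0)
    (hrange : (-1 < μ ∧ μ ≤ lam ∧ lam ≤ 1) ∨ (μ = -1 ∧ -1 ≤ lam ∧ lam < 0)) :
    (∃ D : LieDerivation ℝ RH3 RH3,
        LinearMap.charpoly D.toLinearMap = X * (X - 1) * (X - C μ) * (X - C lam)) ↔
      (μ = -1 ∨ lam = μ ∨ lam = -μ ∨ lam = 1 ∨ lam = 1 - μ ∨ lam = 1 + μ) :=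
  charpoly_derivation_rh3_r4_mu_lambda_iff_general μ lam hrange
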